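/- Under the hypotheses of the Laurent expansion of [I − (T̄ − εD)]^{-1} (irreducible stochastic T̄ with stationary distribution π̄, deviation matrix H, π̄ D 1 ≠ 0), the limit of [I − (T̄ − εD)]^{-1} − (1/ε)·(1/(π̄ D 1)) 1π̄ as ε → 0⁺ equals X₀ = (I − X_{−1}D) H (I − D X_{−1}), where X_{−1} = (1/(π̄ D 1)) 1π̄. -/

import Mathlib

/-!
Write `L = I - T̄` and `Π = 1π̄`. Then `LΠ = ΠL = 0`, `Π² = Π`, and `L + Π` is invertible because
the only fixed vectors of an irreducible stochastic matrix are the constants (maximum principle),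
so `LH = I - Π`. With `X₋₁ = Π / (π̄D1)` one has `LX₋₁ = 0`, `X₋₁DX₋₁ = X₋₁` and `ΠDX₋₁ = Π`, from
which `LX₀ = I - DX₋₁`. Hence `(L + εD)(ε⁻¹X₋₁ + X₀) = I + εDX₀` exactly, and `X₋₁DX₀ = 0` lets
`X₋₁` pass through `(I + εDX₀)⁻¹`, so `(L + εD)⁻¹ - ε⁻¹X₋₁ = X₀(I + εDX₀)⁻¹ → X₀`.
-/

open Matrix Filter Topology Finset

section Laurent

variable {A : Type*} [Ring A]

theorem mul_one_sub_mul_mul_one_sub_mul_eq {L D X H P : A} (hLX : L * X = 0)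
    (hLH : L * H = 1 - P) (hPDX : P * D * X = P) :
    L * ((1 - X * D) * H * (1 - D * X)) = 1 - D * X := by
  have hL : L * (1 - X * D) = L := by rw [mul_sub, mul_one, ← mul_assoc, hLX, zero_mul, sub_zero]
  rw [← mul_assoc, ← mul_assoc, hL, hLH, sub_mul, one_mul, mul_sub, mul_one, ← mul_assoc, hPDX,
    sub_self, sub_zero]

variable {𝕜 : Type*} [Field 𝕜] [Algebra 𝕜 A]

theorem mul_mul_inv_smul_eq {P D : A} {c : 𝕜} (hc : c ≠ 0) (h : P * D * P = c • P) :
    P * D * (c⁻¹ • P) = P := by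
  rw [mul_smul_comm, h, smul_smul, inv_mul_cancel₀ hc, one_smul]

theorem one_sub_sub_smul_mul_inv_smul_add {T D X X0 : A} (hX : (1 - T) * X = 0)
    (hX0 : (1 - T) * X0 = 1 - D * X) {ε : 𝕜} (hε : ε ≠ 0) :
    (1 - (T - ε • D)) * (ε⁻¹ • X + X0) = 1 + ε • (D * X0) := by
  rw [sub_sub_eq_add_sub, add_sub_right_comm, add_mul, mul_add, mul_add, mul_smul_comm, hX,
    smul_zero, zero_add, hX0, smul_mul_smul_comm, mul_inv_cancel₀ hε, one_smul, smul_mul_assoc]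
  abel

end Laurent

namespace Matrix

variable {n : Type*} [Fintype n]

section ReplicateRow

variable {R : Type*} [Semiring R]

theorem vecMul_replicateRow (w v : n → R) : w ᵥ* replicateRow n v = (∑ i, w i) • v := by
  ext j
  simp [vecMul, dotProduct, replicateRow_apply, Finset.sum_mul]

theorem replicateRow_mul_self {π : n → R} (hπ : ∑ i, π i = 1) :
    replicateRow n π * replicateRow n π = replicateRow n π := by
  rw [← replicateRow_vecMul, vecMul_replicateRow, hπ, one_smul]

theorem replicateRow_mul_mul_replicateRow (v w : n → R) (D : Matrix n n R) :
    replicateRow n v * D * replicateRow n w = (∑ i, (v ᵥ* D) i) • replicateRow n w := by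
  rw [← replicateRow_vecMul, ← replicateRow_vecMul, vecMul_replicateRow, replicateRow_smul]

end ReplicateRow

variable [DecidableEq n]

theorem mul_replicateRow_of_mem_rowStochastic {R : Type*} [Semiring R] [PartialOrder R]
    [IsOrderedRing R] {T : Matrix n n R} (hT : T ∈ rowStochastic R n) (v : n → R) :
    T * replicateRow n v = replicateRow n v := by
  ext i j
  simp [mul_apply, replicateRow_apply, ← Finset.sum_mul, sum_row_of_mem_rowStochastic hT i]

section Irreducible

variable {R : Type*} [Field R] [LinearOrder R] [IsStrictOrderedRing R] {T : Matrix n n R}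

theorem eq_of_mulVec_eq_self_of_mem_rowStochastic (hT : T ∈ rowStochastic R n)
    (hirr : T.IsIrreducible) {v : n → R} (hv : T *ᵥ v = v) (i j : n) :
    v i = v j := by
  obtain ⟨m, -, hmax⟩ := exists_max_image univ v ⟨i, mem_univ i⟩
  have hpow : ∀ k : ℕ, (T ^ k) *ᵥ v = v := by
    intro k
    induction k with
    | zero => simp
    | succ k ih => rw [pow_succ, ← mulVec_mulVec, hv, ih]
  suffices h : ∀ j, v j = v m by rw [h i, h j]
  intro j
  obtain ⟨k, -, hpos⟩ := (isIrreducible_iff_exists_pow_pos hT.1).1 hirr m j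
  have hTk := pow_mem hT k
  have hsum : ∑ l, (T ^ k) m l * (v m - v l) = 0 := by
    simp only [mul_sub, sum_sub_distrib, ← Finset.sum_mul, sum_row_of_mem_rowStochastic hTk,
      one_mul]
    exact sub_eq_zero.2 (congrFun (hpow k) m).symm
  have hterm := (sum_eq_zero_iff_of_nonneg fun l _ => mul_nonneg
    (nonneg_of_mem_rowStochastic hTk) (sub_nonneg.2 (hmax l (mem_univ l)))).1 hsum j (mem_univ j)
  exact (sub_eq_zero.1 ((mul_eq_zero.1 hterm).resolve_left hpos.ne')).symm

theorem isUnit_det_one_sub_add_replicateRow (hT : T ∈ rowStochastic R n)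
    (hirr : T.IsIrreducible) {π : n → R} (hπT : π ᵥ* T = π)
    (hπ : ∑ i, π i = 1) : IsUnit (1 - T + replicateRow n π).det := by
  rw [isUnit_iff_ne_zero, Ne, ← exists_mulVec_eq_zero_iff]
  rintro ⟨v, hv0, hBv⟩
  have hπB : π ᵥ* (1 - T + replicateRow n π) = π := by
    rw [vecMul_add, vecMul_sub, vecMul_one, hπT, vecMul_replicateRow, hπ, one_smul, sub_self,
      zero_add]
  have hπv : π ⬝ᵥ v = 0 := by rw [← hπB, ← dotProduct_mulVec, hBv, dotProduct_zero]
  have hTv : T *ᵥ v = v := by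
    rw [add_mulVec, sub_mulVec, one_mulVec, replicateRow_mulVec_eq_const, hπv] at hBv
    exact (sub_eq_zero.1 (by simpa using hBv)).symm
  refine hv0 (funext fun j => ?_)
  calc v j = ∑ i, π i * v j := by rw [← Finset.sum_mul, hπ, one_mul]
    _ = π ⬝ᵥ v := sum_congr rfl fun i _ => by
        rw [eq_of_mulVec_eq_self_of_mem_rowStochastic hT hirr hTv i j]
    _ = 0 := hπv

end Irreducible

theorem mul_inv_add_sub_eq_one_sub {R : Type*} [CommRing R] {L P : Matrix n n R}
    (hLP : L * P = 0) (hPL : P * L = 0) (hP : P * P = P) (hB : IsUnit (L + P).det) :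
    L * ((L + P)⁻¹ - P) = 1 - P := by
  have hPB : P * (L + P)⁻¹ = P := by
    calc P * (L + P)⁻¹ = P * (L + P) * (L + P)⁻¹ := by rw [mul_add, hPL, hP, zero_add]
      _ = P := mul_nonsing_inv_cancel_right _ _ hB
  calc L * ((L + P)⁻¹ - P) = (L + P) * (L + P)⁻¹ - P * (L + P)⁻¹ := by
        rw [mul_sub, hLP, sub_zero, add_mul, add_sub_cancel_right]
    _ = 1 - P := by rw [mul_nonsing_inv _ hB, hPB]

theorem tendsto_inv_sub_smul_of_mul_eq_one_add {𝕜 : Type*} [NormedField 𝕜]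
    {A : 𝕜 → Matrix n n 𝕜} {Xm1 X0 R : Matrix n n 𝕜}
    (hA : ∀ ε ≠ 0, A ε * (ε⁻¹ • Xm1 + X0) = 1 + ε • R) (hR : Xm1 * R = 0) :
    Tendsto (fun ε => (A ε)⁻¹ - ε⁻¹ • Xm1) (𝓝[≠] 0) (𝓝 X0) := by
  have hcont : Continuous fun ε : 𝕜 => 1 + ε • R := by fun_prop
  have hinv : Tendsto (fun ε : 𝕜 => (1 + ε • R)⁻¹) (𝓝 0) (𝓝 1) := by
    have h1 : ContinuousAt Inv.inv (1 : Matrix n n 𝕜) := continuousAt_matrix_inv _ (by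
      simpa [Ring.inverse_eq_inv'] using continuousAt_inv₀ (one_ne_zero' 𝕜))
    simpa [Function.comp_def] using h1.tendsto.comp (hcont.tendsto' 0 1 (by simp))
  have hdet : ∀ᶠ ε in 𝓝 (0 : 𝕜), IsUnit (1 + ε • R).det := by
    simpa [isUnit_iff_ne_zero] using
      hcont.matrix_det.continuousAt.eventually_ne (x := 0) (by simp)
  have hlim : Tendsto (fun ε : 𝕜 => X0 * (1 + ε • R)⁻¹) (𝓝[≠] 0) (𝓝 X0) := by
    simpa using (hinv.const_mul X0).mono_left nhdsWithin_le_nhds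
  refine hlim.congr' ?_
  filter_upwards [eventually_nhdsWithin_of_eventually_nhds hdet, self_mem_nhdsWithin]
    with ε hε hε0
  have hXm1 : Xm1 * (1 + ε • R)⁻¹ = Xm1 := by
    calc Xm1 * (1 + ε • R)⁻¹ = Xm1 * (1 + ε • R) * (1 + ε • R)⁻¹ := by
          rw [mul_add, mul_one, Matrix.mul_smul, hR, smul_zero, add_zero]
      _ = Xm1 := mul_nonsing_inv_cancel_right _ _ hε
  rw [inv_eq_right_inv (A := A ε) (B := (ε⁻¹ • Xm1 + X0) * (1 + ε • R)⁻¹)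
    (by rw [← Matrix.mul_assoc, hA ε hε0, mul_nonsing_inv _ hε]), add_mul, smul_mul, hXm1,
    add_sub_cancel_left]

end Matrix

theorem stmt12_general {n : Type*} [Fintype n] [DecidableEq n]
    (Tbar : Matrix n n ℝ)
    (hnonneg : ∀ i j, 0 ≤ Tbar i j)
    (hstoch : ∀ i, ∑ j, Tbar i j = 1)
    (hirr : ∀ i j, ∃ k, 0 < k ∧ 0 < (Tbar ^ k) i j)
    (pibar : n → ℝ)
    (hstat : pibar ᵥ* Tbar = pibar)
    (hnorm : ∑ i, pibar i = 1)
    (H : Matrix n n ℝ)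
    (hH : H = (1 - Tbar + Matrix.of (fun _ j => pibar j))⁻¹
        - Matrix.of (fun _ j => pibar j))
    (D : Matrix n n ℝ)
    (hD : ∑ i, (pibar ᵥ* D) i ≠ 0)
    (Xm1 : Matrix n n ℝ)
    (hXm1 : Xm1 = (1 / ∑ i, (pibar ᵥ* D) i) • Matrix.of (fun _ j => pibar j)) :
    Tendsto (fun ε : ℝ => (1 - (Tbar - ε • D))⁻¹ - ε⁻¹ • Xm1)
      (𝓝[>] (0 : ℝ))
      (𝓝 ((1 - Xm1 * D) * H * (1 - D * Xm1))) := by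
  have hT : Tbar ∈ rowStochastic ℝ n := mem_rowStochastic_iff_sum.2 ⟨hnonneg, hstoch⟩
  have hirr' : Tbar.IsIrreducible := (isIrreducible_iff_exists_pow_pos hnonneg).2 hirr
  change H = (1 - Tbar + replicateRow n pibar)⁻¹ - replicateRow n pibar at hH
  change Xm1 = (1 / ∑ i, (pibar ᵥ* D) i) • replicateRow n pibar at hXm1
  rw [one_div] at hXm1
  have hLP : (1 - Tbar) * replicateRow n pibar = 0 := by
    rw [Matrix.sub_mul, Matrix.one_mul, mul_replicateRow_of_mem_rowStochastic hT, sub_self]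
  have hPL : replicateRow n pibar * (1 - Tbar) = 0 := by
    rw [Matrix.mul_sub, Matrix.mul_one, ← replicateRow_vecMul, hstat, sub_self]
  have hLH : (1 - Tbar) * H = 1 - replicateRow n pibar :=
    hH ▸ mul_inv_add_sub_eq_one_sub hLP hPL (replicateRow_mul_self hnorm)
      (isUnit_det_one_sub_add_replicateRow hT hirr' hstat hnorm)
  have hLX : (1 - Tbar) * Xm1 = 0 := by rw [hXm1, Matrix.mul_smul, hLP, smul_zero]
  have hPDX : replicateRow n pibar * D * Xm1 = replicateRow n pibar :=
    hXm1 ▸ mul_mul_inv_smul_eq hD (replicateRow_mul_mul_replicateRow pibar pibar D)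
  have hXD : IsIdempotentElem (Xm1 * D) := by
    rw [IsIdempotentElem, ← mul_assoc]
    nth_rw 1 [hXm1]
    rw [smul_mul, smul_mul, hPDX, ← hXm1]
  refine (tendsto_inv_sub_smul_of_mul_eq_one_add
    (fun ε hε => one_sub_sub_smul_mul_inv_smul_add hLX
      (mul_one_sub_mul_mul_one_sub_mul_eq hLX hLH hPDX) hε) ?_).mono_left (nhdsGT_le_nhdsNE 0)
  rw [← mul_assoc, ← mul_assoc, ← mul_assoc, hXD.mul_one_sub_self, zero_mul, zero_mul]

/-- `[I - (T̄ - εD)]⁻¹ - (1/ε) X₋₁ → X₀ = (I - X₋₁D)H(I - DX₋₁)` as `ε → 0⁺`. -/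
theorem stmt12 {n : Type*} [Fintype n] [DecidableEq n] [Nonempty n]
    (Tbar : Matrix n n ℝ)
    (hnonneg : ∀ i j, 0 ≤ Tbar i j)
    (hstoch : ∀ i, ∑ j, Tbar i j = 1)
    (hirr : ∀ i j, ∃ k, 0 < k ∧ 0 < (Tbar ^ k) i j)
    (pibar : n → ℝ)
    (hstat : pibar ᵥ* Tbar = pibar)
    (hnorm : ∑ i, pibar i = 1)
    (H : Matrix n n ℝ)
    (hH : H = (1 - Tbar + Matrix.of (fun _ j => pibar j))⁻¹
        - Matrix.of (fun _ j => pibar j))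
    (D : Matrix n n ℝ)
    (hD : ∑ i, (pibar ᵥ* D) i ≠ 0)
    (hsub : ∃ ε₀ > (0 : ℝ), ∀ ε : ℝ, 0 < ε → ε < ε₀ →
      (∀ i j, 0 ≤ (Tbar - ε • D) i j) ∧
      (∀ i, ∑ j, (Tbar - ε • D) i j ≤ 1) ∧
      (∀ μ ∈ spectrum ℂ ((Tbar - ε • D).map (Complex.ofReal ·)),
        ‖μ‖ < 1))
    (Xm1 : Matrix n n ℝ)
    (hXm1 : Xm1 = (1 / ∑ i, (pibar ᵥ* D) i) • Matrix.of (fun _ j => pibar j)) :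
    Tendsto (fun ε : ℝ => (1 - (Tbar - ε • D))⁻¹ - ε⁻¹ • Xm1)
      (𝓝[>] (0 : ℝ))
      (𝓝 ((1 - Xm1 * D) * H * (1 - D * Xm1))) :=
  stmt12_general Tbar hnonneg hstoch hirr pibar hstat hnorm H hH D hD Xm1 hXm1
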